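/- Under the homomorphism π: U_q(osp(1|2n), Θ₁) → Cl_q(n), the images E_i = π(e_i), F_i = π(f_i), K_i = π(k_i) satisfy E_i F_j - (-1)^{[e_i][f_j]} F_j E_i = δ_{ij}(K_i - K_i^{-1})/(q - q^{-1}) for all 1 ≤ i, j ≤ n. In particular, for i = j = n: π(e_n) π(f_n) + π(f_n) π(e_n) = (K_n - K_n^{-1})/(q - q^{-1}). -/

import Mathlib

/-!
Apart from the pairs `ψ_i, ψ_i†`, the odd generators of `Cl_q(n)` pairwise anticommute
(`ψ_i` also with itself), and a product of two elements that each anticommute with a third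
commutes with it; for `i ≠ j` this makes `E_i` and `F_j` commute. The relations `rel_q`,
`rel_qinv` write `v_i^{∓1} = ψ_i ψ_i† + q^{±1} ψ_i† ψ_i`, which turns both sides of a diagonal
relation into the same combination of the products `ψ_i ψ_i†`, `ψ_i† ψ_i`, `ψ_{i+1} ψ_{i+1}†`,
`ψ_{i+1}† ψ_{i+1}`. For the odd generator `e_n` what remains is the scalar identity
`q - q⁻¹ = (s - s⁻¹)(s + s⁻¹)` for `s² = q`.
-/

/-- The defining relations of the deformed Clifford algebra `Cl_q(n)`:
an associative algebra `A` over a field `K` with elements `ψ i`, `ψd i` (for `ψ_i†`),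
`v i`, `vinv i` (for `v_i^{±1}`), `i < n`, satisfying the defining relations. -/
structure CliffordRel (K : Type*) (A : Type*) [Field K] [Ring A] [Algebra K A]
    (q : K) (n : ℕ) (ψ ψd v vinv : ℕ → A) : Prop where
  v_comm : ∀ i j, i < n → j < n → v i * v j = v j * v i
  v_vinv : ∀ i, i < n → v i * vinv i = 1
  vinv_v : ∀ i, i < n → vinv i * v i = 1
  v_ψ : ∀ i j, i < n → j < n → v i * ψ j = (if i = j then q else 1) • (ψ j * v i)
  v_ψd : ∀ i j, i < n → j < n → v i * ψd j = (if i = j then q⁻¹ else 1) • (ψd j * v i)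
  ψ_ψ : ∀ i j, i < n → j < n → ψ i * ψ j + ψ j * ψ i = 0
  ψd_ψd : ∀ i j, i < n → j < n → ψd i * ψd j + ψd j * ψd i = 0
  ψ_ψd : ∀ i j, i < n → j < n → i ≠ j → ψ i * ψd j + ψd j * ψ i = 0
  rel_q : ∀ i, i < n → ψ i * ψd i + q • (ψd i * ψ i) = vinv i
  rel_qinv : ∀ i, i < n → ψ i * ψd i + q⁻¹ • (ψd i * ψ i) = v i

section

variable {A : Type*} [NonUnitalRing A] {a b c d : A}

def AntiCommute (a b : A) : Prop := a * b + b * a = 0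

namespace AntiCommute

theorem symm (h : AntiCommute a b) : AntiCommute b a := by
  rwa [AntiCommute, add_comm]

theorem mul_eq_neg (h : AntiCommute a b) : a * b = -(b * a) :=
  eq_neg_of_add_eq_zero_left h

theorem commute_mul_left (hac : AntiCommute a c) (hbc : AntiCommute b c) :
    Commute (a * b) c :=
  calc a * b * c = -(a * c * b) := by rw [mul_assoc, hbc.mul_eq_neg, mul_neg, mul_assoc]
    _ = c * (a * b) := by rw [hac.mul_eq_neg, neg_mul, neg_neg, mul_assoc]

theorem commute_mul_right (hab : AntiCommute a b) (hac : AntiCommute a c) :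
    Commute a (b * c) :=
  (commute_mul_left hab.symm hac.symm).symm

theorem commute_mul_mul (hac : AntiCommute a c) (had : AntiCommute a d)
    (hbc : AntiCommute b c) (hbd : AntiCommute b d) : Commute (a * b) (c * d) :=
  (commute_mul_left hac hbc).mul_right (commute_mul_left had hbd)

end AntiCommute

end

theorem sub_inv_ne_zero_of_sq_ne_one {K : Type*} [Field K] {q : K} (hq0 : q ≠ 0)
    (hq1 : q ^ 2 ≠ 1) : q - q⁻¹ ≠ 0 := by
  rwa [Ne, sub_eq_zero, ← mul_eq_one_iff_eq_inv₀ hq0, ← sq]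

section Images

variable {K A : Type*} [Field K] [Ring A] [Algebra K A]

-- `π(e_{i+1})` and `π(f_{i+1})` (indices start at `0`), with `c = √-1 (q^{1/2} - q^{-1/2})⁻¹`.
def cliffordE (n : ℕ) (c : K) (ψ ψd : ℕ → A) (i : ℕ) : A :=
  if i + 1 < n then ψ i * ψd (i + 1) else c • ψ i

def cliffordF (n : ℕ) (ψ ψd : ℕ → A) (i : ℕ) : A :=
  if i + 1 < n then ψ (i + 1) * ψd i else ψd i

end Images

namespace CliffordRel

variable {K A : Type*} [Field K] [Ring A] [Algebra K A] {q : K} {n : ℕ} {ψ ψd v vinv : ℕ → A}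

theorem v_eq (h : CliffordRel K A q n ψ ψd v vinv) {i : ℕ} (hi : i < n) :
    v i = ψ i * ψd i + q⁻¹ • (ψd i * ψ i) :=
  (h.rel_qinv i hi).symm

theorem vinv_eq (h : CliffordRel K A q n ψ ψd v vinv) {i : ℕ} (hi : i < n) :
    vinv i = ψ i * ψd i + q • (ψd i * ψ i) :=
  (h.rel_q i hi).symm

theorem commutator_eq (h : CliffordRel K A q n ψ ψd v vinv) (hq : q - q⁻¹ ≠ 0) {i : ℕ}
    (hi : i + 1 < n) :
    ψ i * ψd (i + 1) * (ψ (i + 1) * ψd i) - ψ (i + 1) * ψd i * (ψ i * ψd (i + 1)) =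
      (q - q⁻¹)⁻¹ • (v i * vinv (i + 1) - vinv i * v (i + 1)) := by
  have hi' : i < n := by omega
  have hne : i + 1 ≠ i := by omega
  have hEF : ψ i * ψd (i + 1) * (ψ (i + 1) * ψd i) = ψ i * ψd i * (ψd (i + 1) * ψ (i + 1)) := by
    have hcomm : Commute (ψd (i + 1) * ψ (i + 1)) (ψd i) :=
      AntiCommute.commute_mul_left (h.ψd_ψd _ _ hi hi') (h.ψ_ψd _ _ hi hi' hne)
    rw [mul_assoc, ← mul_assoc (ψd (i + 1)), hcomm.eq, mul_assoc]
  have hFE : ψ (i + 1) * ψd i * (ψ i * ψd (i + 1)) = ψd i * ψ i * (ψ (i + 1) * ψd (i + 1)) := by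
    have hcomm : Commute (ψd i * ψ i) (ψ (i + 1)) :=
      AntiCommute.commute_mul_left (AntiCommute.symm (h.ψ_ψd _ _ hi hi' hne)) (h.ψ_ψ _ _ hi' hi)
    rw [← mul_assoc, mul_assoc (ψ (i + 1)), ← hcomm.eq, mul_assoc]
  have hK : v i * vinv (i + 1) - vinv i * v (i + 1) = (q - q⁻¹) •
      (ψ i * ψd i * (ψd (i + 1) * ψ (i + 1)) - ψd i * ψ i * (ψ (i + 1) * ψd (i + 1))) := by
    rw [h.v_eq hi', h.vinv_eq hi', h.v_eq hi, h.vinv_eq hi]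
    simp only [add_mul, mul_add, smul_mul_assoc, mul_smul_comm]
    module
  rw [hEF, hFE, hK, smul_smul, inv_mul_cancel₀ hq, one_smul]

theorem anticommutator_smul_ψ_ψd (h : CliffordRel K A q n ψ ψd v vinv) {i : ℕ} (hi : i < n)
    {s : K} (hs : s ^ 2 = q) (hs0 : s ≠ 0) (hq : q - q⁻¹ ≠ 0) (I : K) :
    (I * (s - s⁻¹)⁻¹) • ψ i * ψd i + ψd i * ((I * (s - s⁻¹)⁻¹) • ψ i) =
      (q - q⁻¹)⁻¹ • ((I * s) • v i - (-I * s⁻¹) • vinv i) := by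
  subst hs
  have h4 : s ^ 4 - 1 ≠ 0 := by
    contrapose! hq
    field_simp
    linear_combination hq
  have h2 : s ^ 2 - 1 ≠ 0 := fun e => h4 (by linear_combination (s ^ 2 + 1) * e)
  rw [h.v_eq hi, h.vinv_eq hi, smul_mul_assoc, mul_smul_comm]
  match_scalars <;> field_simp <;> ring

theorem commute_cliffordE_cliffordF (h : CliffordRel K A q n ψ ψd v vinv) (c : K)
    {i j : ℕ} (hi : i < n) (hj : j < n) (hij : i ≠ j) :
    Commute (cliffordE n c ψ ψd i) (cliffordF n ψ ψd j) := by
  have hψψd : AntiCommute (ψ i) (ψd j) := h.ψ_ψd i j hi hj hij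
  unfold cliffordE cliffordF
  split_ifs with hi' hj' hj'
  · exact AntiCommute.commute_mul_mul (h.ψ_ψ _ _ hi hj') hψψd
      (AntiCommute.symm (h.ψ_ψd _ _ hj' hi' (by omega))) (h.ψd_ψd _ _ hi' hj)
  · exact AntiCommute.commute_mul_left hψψd (h.ψd_ψd _ _ hi' hj)
  · exact (AntiCommute.commute_mul_right (h.ψ_ψ _ _ hi hj') hψψd).smul_left c
  · omega

end CliffordRel


theorem stmt10_general {K A : Type*} [Field K] [Ring A] [Algebra K A]
    (q s I : K) (hq0 : q ≠ 0) (hq1 : q ^ 2 ≠ 1) (hs : s ^ 2 = q) (hs0 : s ≠ 0)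
    (n : ℕ) (hn : 1 ≤ n) (ψ ψd v vinv : ℕ → A)
    (h : CliffordRel K A q n ψ ψd v vinv)
    (E F Kk Kinv : ℕ → A)
    (hE : ∀ i, i < n → E i = if i + 1 < n then ψ i * ψd (i+1)
                             else (I * (s - s⁻¹)⁻¹) • ψ i)
    (hF : ∀ i, i < n → F i = if i + 1 < n then ψ (i+1) * ψd i else ψd i)
    (hK : ∀ i, i < n → Kk i = if i + 1 < n then v i * vinv (i+1) else (I * s) • v i)
    (hKinv : ∀ i, i < n → Kinv i = if i + 1 < n then vinv i * v (i+1)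
                                   else (-(I) * s⁻¹) • vinv i) :
    (∀ i j, i < n → j < n →
      E i * F j - (if i + 1 = n ∧ j + 1 = n then (-1 : K) else 1) • (F j * E i) =
        if i = j then (q - q⁻¹)⁻¹ • (Kk i - Kinv i) else 0) ∧
    E (n-1) * F (n-1) + F (n-1) * E (n-1) =
      (q - q⁻¹)⁻¹ • (Kk (n-1) - Kinv (n-1)) := by
  have hq := sub_inv_ne_zero_of_sq_ne_one hq0 hq1
  have hlast : ∀ i, i + 1 = n → E i * F i + F i * E i = (q - q⁻¹)⁻¹ • (Kk i - Kinv i) := by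
    intro i hi
    have hi' : i < n := by omega
    have hin : ¬i + 1 < n := by omega
    rw [hE i hi', hF i hi', hK i hi', hKinv i hi']
    simp only [hin, if_false]
    exact h.anticommutator_smul_ψ_ψd hi' hs hs0 hq I
  refine ⟨fun i j hi hj => ?_, hlast (n - 1) (by omega)⟩
  rcases eq_or_ne i j with rfl | hij
  · rw [if_pos rfl]
    by_cases hin : i + 1 < n
    · rw [if_neg (by omega), one_smul, hE i hi, hF i hi, hK i hi, hKinv i hi]
      simp only [hin, if_true]
      exact h.commutator_eq hq hin
    · rw [if_pos (by omega), neg_smul, one_smul, sub_neg_eq_add]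
      exact hlast i (by omega)
  · rw [if_neg hij, if_neg (by omega), one_smul, sub_eq_zero, hE i hi, hF j hj]
    exact (h.commute_cliffordE_cliffordF _ hi hj hij).eq

/-- under `π : U_q(osp(1|2n), Θ₁) → Cl_q(n)`, the images
`E_i = π(e_i)`, `F_i = π(f_i)`, `K_i = π(k_i)` satisfy
`E_i F_j - (-1)^{[e_i][f_j]} F_j E_i = δ_ij (K_i - K_i⁻¹)/(q - q⁻¹)` for all `i, j`;
in particular `π(e_n) π(f_n) + π(f_n) π(e_n) = (K_n - K_n⁻¹)/(q - q⁻¹)`. -/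
theorem stmt10 {K A : Type*} [Field K] [Ring A] [Algebra K A]
    (q s I : K) (hq0 : q ≠ 0) (hq1 : q ^ 2 ≠ 1) (hs : s ^ 2 = q) (hs0 : s ≠ 0)
    (hI : I ^ 2 = -1)
    (n : ℕ) (hn : 1 ≤ n) (ψ ψd v vinv : ℕ → A)
    (h : CliffordRel K A q n ψ ψd v vinv)
    (E F Kk Kinv : ℕ → A)
    (hE : ∀ i, i < n → E i = if i + 1 < n then ψ i * ψd (i+1)
                             else (I * (s - s⁻¹)⁻¹) • ψ i)
    (hF : ∀ i, i < n → F i = if i + 1 < n then ψ (i+1) * ψd i else ψd i)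
    (hK : ∀ i, i < n → Kk i = if i + 1 < n then v i * vinv (i+1) else (I * s) • v i)
    (hKinv : ∀ i, i < n → Kinv i = if i + 1 < n then vinv i * v (i+1)
                                   else (-(I) * s⁻¹) • vinv i) :
    (∀ i j, i < n → j < n →
      E i * F j - (if i + 1 = n ∧ j + 1 = n then (-1 : K) else 1) • (F j * E i) =
        if i = j then (q - q⁻¹)⁻¹ • (Kk i - Kinv i) else 0) ∧
    E (n-1) * F (n-1) + F (n-1) * E (n-1) =
      (q - q⁻¹)⁻¹ • (Kk (n-1) - Kinv (n-1)) :=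
  stmt10_general q s I hq0 hq1 hs hs0 n hn ψ ψd v vinv h E F Kk Kinv hE hF hK hKinv
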